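/- arXiv:1702.08553 — 4 statements merged into one kernel-verified Lean document; each statement's English description precedes it below -/
import Mathlib

section
/- Let V ⊆ H with π(V) > 0 and h* ∈ V, let ε > 0, write p_map = max_{h∈V} π|_V(h), and pick 0 < α < p_map. If Φ(V) ≤ 2ε · (min{π|_V(h*), p_map − α})², then every h ∈ V with π|_V(h) ≥ p_map − α satisfies d(h*, h) ≤ ε. -/
open MeasureTheory Finset

/-- `derr D pred h h'` is the hypothesis distance
`d(h,h') = Pr_{x ~ D}(h(x) ≠ h'(x))`. -/
noncomputable def derr {X 𝓗 : Type*} [MeasurableSpace X] (D : Measure X)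
    (pred : 𝓗 → X → Bool) (h h' : 𝓗) : ℝ :=
  (D {x | pred h x ≠ pred h' x}).toReal

/-- `pmass π V` is the probability mass `π(V)`. -/
noncomputable def pmass {𝓗 : Type*} (π : 𝓗 → ℝ) (V : Finset 𝓗) : ℝ :=
  ∑ h ∈ V, π h

/-- `avgDiam D pred π V` is the average diameter
`Φ(V) = E_{h,h' ~ π|_V}[d(h,h')]`. -/
noncomputable def avgDiam {X 𝓗 : Type*} [MeasurableSpace X] (D : Measure X)
    (pred : 𝓗 → X → Bool) (π : 𝓗 → ℝ) (V : Finset 𝓗) : ℝ :=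
  (∑ h ∈ V, ∑ h' ∈ V, π h * π h' * derr D pred h h') / (pmass π V) ^ 2

/-! The pair `(h*, h)` and its mirror image `(h, h*)` together contribute
`2 π|_V(h*) π|_V(h) d(h*,h)` to `Φ(V)`, and both conditional masses are at least
`m = min{π|_V(h*), p_map − α}`; hence `2 m² d(h*,h) ≤ Φ(V) ≤ 2 ε m²`. -/

section Derr

variable {X 𝓗 : Type*} [MeasurableSpace X] (D : Measure X) (pred : 𝓗 → X → Bool)

lemma derr_nonneg (h h' : 𝓗) : 0 ≤ derr D pred h h' :=
  ENNReal.toReal_nonneg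

@[simp]
lemma derr_self (h : 𝓗) : derr D pred h h = 0 := by
  simp [derr]

lemma derr_comm (h h' : 𝓗) : derr D pred h h' = derr D pred h' h := by
  simp only [derr, ne_comm]

end Derr

lemma two_mul_weight_mul_le_sum_sum {ι : Type*} {s : Finset ι}
    {w : ι → ℝ} {d : ι → ι → ℝ} (hw : ∀ i, 0 ≤ w i) (hd : ∀ i j, 0 ≤ d i j)
    (hsymm : ∀ i j, d i j = d j i) (hself : ∀ i, d i i = 0) {a b : ι}
    (ha : a ∈ s) (hb : b ∈ s) :
    2 * (w a * w b * d a b) ≤ ∑ i ∈ s, ∑ j ∈ s, w i * w j * d i j := by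
  classical
  have hnonneg : ∀ p : ι × ι, 0 ≤ w p.1 * w p.2 * d p.1 p.2 := fun p =>
    mul_nonneg (mul_nonneg (hw _) (hw _)) (hd _ _)
  rw [← Finset.sum_product' s s fun i j => w i * w j * d i j]
  by_cases hab : a = b
  · subst hab
    simpa [hself] using Finset.sum_nonneg fun p _ => hnonneg p
  have hpair : (a, b) ≠ (b, a) := fun h => hab (Prod.ext_iff.mp h).1
  have hsub : ({(a, b), (b, a)} : Finset (ι × ι)) ⊆ s ×ˢ s := by
    simp [Finset.insert_subset_iff, ha, hb]
  calc 2 * (w a * w b * d a b)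
      = ∑ p ∈ {(a, b), (b, a)}, w p.1 * w p.2 * d p.1 p.2 := by
        rw [Finset.sum_pair hpair, hsymm b a]; ring
    _ ≤ ∑ p ∈ s ×ˢ s, w p.1 * w p.2 * d p.1 p.2 :=
        Finset.sum_le_sum_of_subset_of_nonneg hsub fun p _ _ => hnonneg p

lemma two_mul_cond_mul_derr_le_avgDiam {X 𝓗 : Type*} [MeasurableSpace X] (D : Measure X)
    (pred : 𝓗 → X → Bool) {π : 𝓗 → ℝ} (hπ : ∀ h, 0 ≤ π h) {V : Finset 𝓗}
    {a b : 𝓗} (ha : a ∈ V) (hb : b ∈ V) :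
    2 * (π a / pmass π V) * (π b / pmass π V) * derr D pred a b ≤ avgDiam D pred π V := by
  have key := two_mul_weight_mul_le_sum_sum hπ (derr_nonneg D pred) (derr_comm D pred)
    (derr_self D pred) ha hb
  calc 2 * (π a / pmass π V) * (π b / pmass π V) * derr D pred a b
      = 2 * (π a * π b * derr D pred a b) / pmass π V ^ 2 := by ring
    _ ≤ avgDiam D pred π V := div_le_div_of_nonneg_right key (sq_nonneg _)

theorem stmt_1_general {X 𝓗 : Type*} [MeasurableSpace X]
    (D : Measure X) (pred : 𝓗 → X → Bool)
    (π : 𝓗 → ℝ) (hπpos : ∀ h, 0 < π h)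
    (V : Finset 𝓗) (hV : 0 < pmass π V)
    (hstar : 𝓗) (hmem : hstar ∈ V) (ε : ℝ)
    (pmap : ℝ)
    (α : ℝ) (hαp : α < pmap)
    (hdiam : avgDiam D pred π V
      ≤ 2 * ε * (min (π hstar / pmass π V) (pmap - α)) ^ 2) :
    ∀ h ∈ V, pmap - α ≤ π h / pmass π V → derr D pred hstar h ≤ ε := by
  intro h hmemh hge
  set m := min (π hstar / pmass π V) (pmap - α)
  have hm : 0 < m := lt_min (div_pos (hπpos hstar) hV) (sub_pos.mpr hαp)
  have hm_star : m ≤ π hstar / pmass π V := min_le_left _ _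
  have hm_h : m ≤ π h / pmass π V := (min_le_right _ _).trans hge
  have hpair := two_mul_cond_mul_derr_le_avgDiam D pred (fun h => (hπpos h).le) hmem hmemh
  have hsq : m * m ≤ π hstar / pmass π V * (π h / pmass π V) :=
    mul_le_mul hm_star hm_h hm.le (hm.le.trans hm_star)
  have hbound : 2 * m ^ 2 * derr D pred hstar h ≤ 2 * m ^ 2 * ε :=
    calc 2 * m ^ 2 * derr D pred hstar h
        = 2 * (m * m) * derr D pred hstar h := by ring
      _ ≤ 2 * (π hstar / pmass π V * (π h / pmass π V)) * derr D pred hstar h := by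
        gcongr; exact derr_nonneg D pred hstar h
      _ ≤ avgDiam D pred π V := by rw [← mul_assoc]; exact hpair
      _ ≤ 2 * m ^ 2 * ε := by linarith
  exact le_of_mul_le_mul_left hbound (by positivity)

/-- MAP estimation.  If `Φ(V) ≤ 2ε (min{π|_V(h*), p_map - α})²`,
then every `h ∈ V` with `π|_V(h) ≥ p_map - α` satisfies `d(h*,h) ≤ ε`. -/
theorem stmt_1 {X 𝓗 : Type*} [MeasurableSpace X] [Fintype 𝓗]
    (D : Measure X) [IsProbabilityMeasure D] (pred : 𝓗 → X → Bool)
    (π : 𝓗 → ℝ) (hπpos : ∀ h, 0 < π h) (hπsum : ∑ h, π h = 1)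
    (V : Finset 𝓗) (hV : 0 < pmass π V)
    (hstar : 𝓗) (hmem : hstar ∈ V) (ε : ℝ) (hε : 0 < ε)
    (pmap : ℝ)
    (hub : ∀ h ∈ V, π h / pmass π V ≤ pmap)
    (hach : ∃ h ∈ V, π h / pmass π V = pmap)
    (α : ℝ) (hα0 : 0 < α) (hαp : α < pmap)
    (hdiam : avgDiam D pred π V
      ≤ 2 * ε * (min (π hstar / pmass π V) (pmap - α)) ^ 2) :
    ∀ h ∈ V, pmap - α ≤ π h / pmass π V → derr D pred hstar h ≤ ε :=
  stmt_1_general D pred π hπpos V hV hstar hmem ε pmap α hαp hdiam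
end

section
/- Let F be a finite edge multiset, let K ≥ 1 and k ∈ {1,…,K}, let ε > 0, and let E_k ⊆ F be a sub-multiset such that every edge {h,h'} ∈ E_k satisfies 2^{k−1}ε ≤ d(h,h') < 2^k ε, and such that 2^k · ε · |E_k| ≥ ψ(F)/K. If the point x ∈ X ρ-splits E_k (i.e. max{|(E_k)_x^+|, |(E_k)_x^−|} ≤ (1−ρ)|E_k|), then max{ψ(F_x^+), ψ(F_x^−)} ≤ (1 − ρ/(2K)) · ψ(F). -/
/-!
An edge of `E_k` that is not counted in `(E_k)_x^±` lies in `F` but not in `F_x^±`, and has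
length at least `2^{k-1} ε`. Since `x` `ρ`-splits `E_k`, at least `ρ |E_k|` such edges exist, so
`ψ(F) - ψ(F_x^±) ≥ 2^{k-1} ε ρ |E_k| ≥ ρ ψ(F) / (2K)` by the lower bound on `|E_k|`.
-/

open MeasureTheory Finset

/-- `ψ(E) = Σ_{{h,h'} ∈ E} d(h,h')` for a finite edge multiset `E`. -/
noncomputable def psiM {X 𝓗 : Type*} [MeasurableSpace X] (D : Measure X)
    (pred : 𝓗 → X → Bool) (E : Multiset (𝓗 × 𝓗)) : ℝ :=
  (E.map fun e => derr D pred e.1 e.2).sum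

namespace Multiset

variable {α : Type*} (w : α → ℝ)

lemma sum_map_filter_add_sum_map_filter_not (p : α → Prop) [DecidablePred p] (s : Multiset α) :
    ((s.filter p).map w).sum + ((s.filter fun a => ¬p a).map w).sum = (s.map w).sum := by
  rw [← sum_add, ← map_add, filter_add_not]

lemma sum_map_mono_of_le {s t : Multiset α} (hst : s ≤ t) (hw : ∀ a ∈ t, 0 ≤ w a) :
    (s.map w).sum ≤ (t.map w).sum := by
  obtain ⟨u, rfl⟩ := le_iff_exists_add.mp hst
  rw [map_add, sum_add]
  exact le_add_of_nonneg_right <| sum_nonneg fun _ hb => by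
    obtain ⟨a, ha, rfl⟩ := mem_map.mp hb
    exact hw a (mem_add.mpr (Or.inr ha))

lemma sum_map_filter_add_mul_card_le {s t : Multiset α} (hst : s ≤ t) (hw : ∀ a ∈ t, 0 ≤ w a)
    {c ρ : ℝ} (hc : 0 ≤ c) (hlow : ∀ a ∈ s, c ≤ w a) (p : α → Prop) [DecidablePred p]
    (hcard : (card (s.filter p) : ℝ) ≤ (1 - ρ) * card s) :
    ((t.filter p).map w).sum + c * ρ * card s ≤ (t.map w).sum := by
  have hcard_not : ρ * card s ≤ card (s.filter fun a => ¬p a) := by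
    have := congrArg card (filter_add_not p s)
    rw [card_add] at this
    rw [← this] at hcard ⊢
    push_cast at hcard ⊢
    linarith
  have hrest : c * ρ * card s ≤ ((s.filter fun a => ¬p a).map w).sum :=
    calc c * ρ * card s ≤ card (s.filter fun a => ¬p a) • c := by
          rw [nsmul_eq_mul, mul_assoc, mul_comm (card _ : ℝ)]
          exact mul_le_mul_of_nonneg_left hcard_not hc
      _ ≤ ((s.filter fun a => ¬p a).map w).sum := by
          simpa using card_nsmul_le_sum (s := (s.filter fun a => ¬p a).map w) (a := c)
            fun _ hb => by
              obtain ⟨a, ha, rfl⟩ := mem_map.mp hb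
              exact hlow a (mem_of_mem_filter ha)
  have hmono := sum_map_mono_of_le w (filter_le_filter (fun a => ¬p a) hst)
    fun a ha => hw a (mem_of_mem_filter ha)
  linarith [sum_map_filter_add_sum_map_filter_not w p t]

end Multiset

section psiM

variable {X 𝓗 : Type*} [MeasurableSpace X] (D : Measure X) (pred : 𝓗 → X → Bool)

lemma psiM_le_of_le {E F : Multiset (𝓗 × 𝓗)} (h : E ≤ F) : psiM D pred E ≤ psiM D pred F :=
  Multiset.sum_map_mono_of_le _ h fun e _ => derr_nonneg D pred e.1 e.2

lemma psiM_nonneg (E : Multiset (𝓗 × 𝓗)) : 0 ≤ psiM D pred E := by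
  simpa [psiM] using psiM_le_of_le D pred (Multiset.zero_le E)

lemma psiM_filter_le_of_card_filter_le {F Ek : Multiset (𝓗 × 𝓗)} {K k : ℕ} {ε ρ : ℝ}
    (hε : 0 < ε) (hsub : Ek ≤ F)
    (hlow : ∀ e ∈ Ek, (2 : ℝ) ^ (k - 1) * ε ≤ derr D pred e.1 e.2)
    (hbig : psiM D pred F / (K : ℝ) ≤ (2 : ℝ) ^ k * ε * (Multiset.card Ek : ℝ))
    (p : 𝓗 × 𝓗 → Prop) [DecidablePred p]
    (hcard : (Multiset.card (Ek.filter p) : ℝ) ≤ (1 - ρ) * Multiset.card Ek) :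
    psiM D pred (F.filter p) ≤ (1 - ρ / (2 * (K : ℝ))) * psiM D pred F := by
  have hψ := psiM_nonneg D pred F
  rcases lt_or_ge ρ 0 with hρ | hρ
  · have : ρ / (2 * (K : ℝ)) ≤ 0 := div_nonpos_of_nonpos_of_nonneg hρ.le (by positivity)
    nlinarith [psiM_le_of_le D pred (Multiset.filter_le p F)]
  have hloss := Multiset.sum_map_filter_add_mul_card_le (fun e => derr D pred e.1 e.2) hsub
    (fun e _ => derr_nonneg D pred e.1 e.2) (by positivity) hlow p hcard
  have hpow : (2 : ℝ) ^ k ≤ 2 * 2 ^ (k - 1) :=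
    calc (2 : ℝ) ^ k ≤ 2 ^ (k - 1 + 1) := pow_le_pow_right₀ (by norm_num) (by omega)
      _ = 2 * 2 ^ (k - 1) := pow_succ' _ _
  have hgain : ρ / (2 * (K : ℝ)) * psiM D pred F ≤ 2 ^ (k - 1) * ε * ρ * Multiset.card Ek :=
    calc ρ / (2 * (K : ℝ)) * psiM D pred F = ρ / 2 * (psiM D pred F / K) := by ring
      _ ≤ ρ / 2 * (2 ^ k * ε * Multiset.card Ek) := by gcongr
      _ ≤ ρ / 2 * (2 * 2 ^ (k - 1) * ε * Multiset.card Ek) := by gcongr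
      _ = 2 ^ (k - 1) * ε * ρ * Multiset.card Ek := by ring
  simp only [psiM] at hloss hgain ⊢
  linarith

end psiM

theorem stmt_8_general {X 𝓗 : Type*} [MeasurableSpace X]
    (D : Measure X) (pred : 𝓗 → X → Bool)
    (F Ek : Multiset (𝓗 × 𝓗)) (K k : ℕ)
    (ε ρ : ℝ) (hε : 0 < ε)
    (hsub : Ek ≤ F)
    (hlen : ∀ e ∈ Ek, (2 : ℝ) ^ (k - 1) * ε ≤ derr D pred e.1 e.2
      ∧ derr D pred e.1 e.2 < (2 : ℝ) ^ k * ε)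
    (hbig : psiM D pred F / (K : ℝ) ≤ (2 : ℝ) ^ k * ε * (Multiset.card Ek : ℝ))
    (x : X)
    (hsplit :
      ((max (Multiset.card (Ek.filter fun e => pred e.1 x = true ∧ pred e.2 x = true))
            (Multiset.card (Ek.filter fun e => pred e.1 x = false ∧ pred e.2 x = false)) : ℕ) : ℝ)
        ≤ (1 - ρ) * (Multiset.card Ek : ℝ)) :
    max (psiM D pred (F.filter fun e => pred e.1 x = true ∧ pred e.2 x = true))
        (psiM D pred (F.filter fun e => pred e.1 x = false ∧ pred e.2 x = false))
      ≤ (1 - ρ / (2 * (K : ℝ))) * psiM D pred F := by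
  have hlow e he := (hlen e he).1
  exact max_le
    (psiM_filter_le_of_card_filter_le D pred hε hsub hlow hbig _
      (le_trans (by exact_mod_cast le_max_left _ _) hsplit))
    (psiM_filter_le_of_card_filter_le D pred hε hsub hlow hbig _
      (le_trans (by exact_mod_cast le_max_right _ _) hsplit))

/-- core computation of the splitting lemma, for edge multisets. -/
theorem stmt_8 {X 𝓗 : Type*} [MeasurableSpace X]
    (D : Measure X) [IsProbabilityMeasure D] (pred : 𝓗 → X → Bool)
    (F Ek : Multiset (𝓗 × 𝓗)) (K k : ℕ) (hK : 1 ≤ K) (hk1 : 1 ≤ k) (hkK : k ≤ K)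
    (ε ρ : ℝ) (hε : 0 < ε)
    (hsub : Ek ≤ F)
    (hlen : ∀ e ∈ Ek, (2 : ℝ) ^ (k - 1) * ε ≤ derr D pred e.1 e.2
      ∧ derr D pred e.1 e.2 < (2 : ℝ) ^ k * ε)
    (hbig : psiM D pred F / (K : ℝ) ≤ (2 : ℝ) ^ k * ε * (Multiset.card Ek : ℝ))
    (x : X)
    (hsplit :
      ((max (Multiset.card (Ek.filter fun e => pred e.1 x = true ∧ pred e.2 x = true))
            (Multiset.card (Ek.filter fun e => pred e.1 x = false ∧ pred e.2 x = false)) : ℕ) : ℝ)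
        ≤ (1 - ρ) * (Multiset.card Ek : ℝ)) :
    max (psiM D pred (F.filter fun e => pred e.1 x = true ∧ pred e.2 x = true))
        (psiM D pred (F.filter fun e => pred e.1 x = false ∧ pred e.2 x = false))
      ≤ (1 - ρ / (2 * (K : ℝ))) * psiM D pred F :=
  stmt_8_general D pred F Ek K k ε ρ hε hsub hlen hbig x hsplit
end

section
/- Let V ⊆ H with π(V) > 0 and Φ(V) > 0, let 0 < ρ̂ ≤ 1, and let x ∈ X and ρ satisfy 2ρ̂ ≤ ρ ≤ 1/2 together with (π(V_x^+)/π(V))² · Φ(V_x^+) ≤ (1−ρ)·Φ(V). Let Φ̂ be a real number with (1 − ρ̂/4)·Φ(V) ≤ Φ̂ ≤ (1 + ρ̂/4)·Φ(V). If E consists of n pairs formed from 2n i.i.d. draws from π|_V, then Pr( (1/n)·ψ(E_x^+) > (1 − ρ̂)·Φ̂ ) ≤ exp( − n·Φ̂·ρ̂² / 12 ). -/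
open MeasureTheory Finset

/-- `condw π V h` is the conditional probability `π|_V(h)`. -/
noncomputable def condw {𝓗 : Type*} [DecidableEq 𝓗] (π : 𝓗 → ℝ) (V : Finset 𝓗)
    (h : 𝓗) : ℝ :=
  if h ∈ V then π h / pmass π V else 0

/-!
Each pair of `E` contributes `Z = d(h, h')·[h(x) = h'(x) = 1]`, a `[0,1]`-valued variable whose
mean is `(π(V_x^+)/π(V))² Φ(V_x^+) ≤ (1 - ρ) Φ(V) ≤ (1 - 2ρ̂) Φ(V)`. The threshold
`(1 - ρ̂) Φ̂` exceeds this mean by roughly `ρ̂ Φ̂`, so the multiplicative Chernoff bound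
with parameter `λ = ρ̂/4` (the moment generating function of a `[0,1]`-valued variable being
dominated by that of a Bernoulli variable, by convexity of `exp`) gives the tail
`exp(-n Φ̂ ρ̂²/12)`.
-/

lemma Finset.sum_ite_le_sum_ite_of_imp {ι : Type*} (s : Finset ι) {p q : ι → Prop}
    [DecidablePred p] [DecidablePred q] {f : ι → ℝ} (hf : ∀ i, 0 ≤ f i) (hpq : ∀ i, p i → q i) :
    ∑ i ∈ s, (if p i then f i else 0) ≤ ∑ i ∈ s, if q i then f i else 0 :=
  sum_le_sum fun i _ => by
    split_ifs with hp hq hq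
    exacts [le_rfl, absurd (hpq i hp) hq, hf i, le_rfl]

lemma Real.exp_mul_le_one_add_mul_exp_sub_one (l : ℝ) {z : ℝ} (hz0 : 0 ≤ z) (hz1 : z ≤ 1) :
    Real.exp (l * z) ≤ 1 + z * (Real.exp l - 1) := by
  have := convexOn_exp.2 (Set.mem_univ l) (Set.mem_univ 0) hz0 (sub_nonneg.2 hz1) (by ring)
  simp only [smul_eq_mul, mul_zero, add_zero, Real.exp_zero, mul_one] at this
  rw [mul_comm l z]; linarith

lemma Real.exp_sub_one_mul_one_sub_le {l : ℝ} (hl0 : 0 ≤ l) (hl1 : l < 1) :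
    (Real.exp l - 1) * (1 - l) ≤ l := by
  have h := Real.exp_bound_div_one_sub_of_interval hl0 hl1
  rw [le_div_iff₀ (by linarith)] at h
  linarith

lemma Nat.cast_mul_lt_of_lt_one_div_mul {n : ℕ} {t s : ℝ} (ht : 0 ≤ t) (h : t < 1 / (n : ℝ) * s) :
    n * t < s := by
  rcases n.eq_zero_or_pos with rfl | hn
  · -- `1 / 0 = 0`, so for `n = 0` the hypothesis says `t < 0`
    simp only [CharP.cast_eq_zero, div_zero, zero_mul] at h
    linarith
  · rwa [one_div_mul_eq_div, lt_div_iff₀' (by exact_mod_cast hn)] at h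

section Chernoff

variable {α : Type*} [Fintype α] {W Z : α → ℝ}

lemma sum_prod_mul_exp_sum_eq_pow (W Z : α → ℝ) (n : ℕ) (l : ℝ) :
    ∑ ω : Fin n → α, (∏ i, W (ω i)) * Real.exp (l * ∑ i, Z (ω i))
      = (∑ a, W a * Real.exp (l * Z a)) ^ n := by
  rw [Finset.sum_pow', Fintype.piFinset_univ]
  refine sum_congr rfl fun ω _ => ?_
  rw [prod_mul_distrib, mul_sum, Real.exp_sum]

lemma sum_mul_exp_le_exp_sum_mul (hW0 : ∀ a, 0 ≤ W a) (hW1 : ∑ a, W a ≤ 1)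
    (hZ0 : ∀ a, 0 ≤ Z a) (hZ1 : ∀ a, Z a ≤ 1) (l : ℝ) :
    ∑ a, W a * Real.exp (l * Z a) ≤ Real.exp ((∑ a, W a * Z a) * (Real.exp l - 1)) := by
  calc ∑ a, W a * Real.exp (l * Z a)
      ≤ ∑ a, W a * (1 + Z a * (Real.exp l - 1)) :=
        sum_le_sum fun a _ => mul_le_mul_of_nonneg_left
          (Real.exp_mul_le_one_add_mul_exp_sub_one l (hZ0 a) (hZ1 a)) (hW0 a)
    _ = ∑ a, W a + (∑ a, W a * Z a) * (Real.exp l - 1) := by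
        simp only [mul_add, mul_one, ← mul_assoc, sum_add_distrib, sum_mul]
    _ ≤ 1 + (∑ a, W a * Z a) * (Real.exp l - 1) := by gcongr
    _ ≤ Real.exp ((∑ a, W a * Z a) * (Real.exp l - 1)) := by
        rw [add_comm]; exact Real.add_one_le_exp _

theorem sum_prod_ite_lt_sum_le_exp (hW0 : ∀ a, 0 ≤ W a) (hW1 : ∑ a, W a ≤ 1)
    (hZ0 : ∀ a, 0 ≤ Z a) (hZ1 : ∀ a, Z a ≤ 1) (n : ℕ) {l : ℝ} (hl : 0 ≤ l) (s : ℝ) :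
    ∑ ω : Fin n → α, (if s < ∑ i, Z (ω i) then ∏ i, W (ω i) else 0)
      ≤ Real.exp (n * ((∑ a, W a * Z a) * (Real.exp l - 1)) - l * s) := by
  calc ∑ ω : Fin n → α, (if s < ∑ i, Z (ω i) then ∏ i, W (ω i) else 0)
      ≤ ∑ ω : Fin n → α, (∏ i, W (ω i)) * Real.exp (l * ∑ i, Z (ω i)) * Real.exp (-(l * s)) :=
        sum_le_sum fun ω _ => by
          have hP : 0 ≤ ∏ i, W (ω i) := prod_nonneg fun i _ => hW0 (ω i)
          split_ifs with hs
          · rw [mul_assoc, ← Real.exp_add]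
            exact le_mul_of_one_le_right hP (Real.one_le_exp (by nlinarith))
          · positivity
    _ = (∑ a, W a * Real.exp (l * Z a)) ^ n * Real.exp (-(l * s)) := by
        rw [← sum_mul, sum_prod_mul_exp_sum_eq_pow]
    _ ≤ Real.exp ((∑ a, W a * Z a) * (Real.exp l - 1)) ^ n * Real.exp (-(l * s)) := by
        gcongr
        · exact sum_nonneg fun a _ => mul_nonneg (hW0 a) (Real.exp_nonneg _)
        · exact sum_mul_exp_le_exp_sum_mul hW0 hW1 hZ0 hZ1 l
    _ = Real.exp (n * ((∑ a, W a * Z a) * (Real.exp l - 1)) - l * s) := by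
        rw [← Real.exp_nat_mul, ← Real.exp_add, ← sub_eq_add_neg]

end Chernoff

lemma tail_exponent_le {r μ Φ : ℝ} (hr0 : 0 ≤ r) (hr : r ≤ 1 / 4) (hΦ : 0 ≤ Φ)
    (hμ : μ * (1 - r / 4) ≤ (1 - 2 * r) * Φ) :
    μ * (Real.exp (r / 4) - 1) - r / 4 * ((1 - r) * Φ) ≤ -(Φ * r ^ 2) / 12 := by
  set c := Real.exp (r / 4) - 1
  have hc0 : 0 ≤ c := by linarith [Real.add_one_le_exp (r / 4)]
  have hc : c * (1 - r / 4) ≤ r / 4 := Real.exp_sub_one_mul_one_sub_le (by linarith) (by linarith)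
  have hmul : μ * c * (1 - r / 4) ^ 2 ≤ (1 - 2 * r) * Φ * (r / 4) :=
    calc μ * c * (1 - r / 4) ^ 2 = (μ * (1 - r / 4)) * (c * (1 - r / 4)) := by ring
      _ ≤ (1 - 2 * r) * Φ * (r / 4) :=
        mul_le_mul hμ hc (mul_nonneg hc0 (by linarith)) (mul_nonneg (by linarith) hΦ)
  -- the difference of the two sides is `Φ r² (1/6 + 35 r/48 - r²/12) / 4`
  have hpoly : (1 - 2 * r) * Φ * (r / 4)
      ≤ (r / 4 * ((1 - r) * Φ) - Φ * r ^ 2 / 12) * (1 - r / 4) ^ 2 := by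
    have hq : 0 ≤ 1 / 6 + 35 * r / 48 - r ^ 2 / 12 := by nlinarith
    nlinarith [mul_nonneg (mul_nonneg hΦ (sq_nonneg r)) hq]
  have := le_of_mul_le_mul_right (hmul.trans hpoly) (by nlinarith)
  linarith

lemma pmass_nonneg {𝓗 : Type*} {π : 𝓗 → ℝ} (hπ : ∀ h, 0 ≤ π h) (V : Finset 𝓗) : 0 ≤ pmass π V :=
  sum_nonneg fun h _ => hπ h

section Distances

variable {X 𝓗 : Type*} [MeasurableSpace X] (D : Measure X) (pred : 𝓗 → X → Bool)

lemma derr_le_one [IsProbabilityMeasure D] (h h' : 𝓗) : derr D pred h h' ≤ 1 :=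
  measureReal_le_one

lemma avgDiam_nonneg {π : 𝓗 → ℝ} (hπ : ∀ h, 0 ≤ π h) (V : Finset 𝓗) :
    0 ≤ avgDiam D pred π V :=
  div_nonneg (sum_nonneg fun h _ => sum_nonneg fun h' _ =>
    mul_nonneg (mul_nonneg (hπ h) (hπ h')) (derr_nonneg D pred h h')) (sq_nonneg _)

lemma sq_pmass_div_mul_avgDiam {π : 𝓗 → ℝ} (hπ : ∀ h, 0 < π h) (A V : Finset 𝓗) :
    (pmass π A / pmass π V) ^ 2 * avgDiam D pred π A
      = (∑ h ∈ A, ∑ h' ∈ A, π h * π h' * derr D pred h h') / pmass π V ^ 2 := by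
  rcases A.eq_empty_or_nonempty with rfl | hA
  · simp [avgDiam, pmass]
  · have hA : 0 < pmass π A := sum_pos (fun h _ => hπ h) hA
    rw [avgDiam]
    field_simp

end Distances

section ConditionalWeights

variable {𝓗 : Type*} [DecidableEq 𝓗] {π : 𝓗 → ℝ}

lemma condw_nonneg (hπ : ∀ h, 0 ≤ π h) (V : Finset 𝓗) (h : 𝓗) : 0 ≤ condw π V h := by
  unfold condw
  split_ifs
  exacts [div_nonneg (hπ h) (pmass_nonneg hπ V), le_rfl]

variable [Fintype 𝓗]

lemma sum_condw_le_one (π : 𝓗 → ℝ) (V : Finset 𝓗) : ∑ h, condw π V h ≤ 1 := by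
  simp only [condw]
  rw [Fintype.sum_ite_mem, ← sum_div]
  exact div_self_le_one (pmass π V)

lemma sum_condw_mul_condw_le_one (hπ : ∀ h, 0 ≤ π h) (V : Finset 𝓗) :
    ∑ p : 𝓗 × 𝓗, condw π V p.1 * condw π V p.2 ≤ 1 := by
  rw [Fintype.sum_prod_type, ← sum_mul_sum]
  exact mul_le_one₀ (sum_condw_le_one π V)
    (sum_nonneg fun h _ => condw_nonneg hπ V h) (sum_condw_le_one π V)

lemma sum_condw_mul_condw_mul_ite_and (π : 𝓗 → ℝ) (V : Finset 𝓗) (P : 𝓗 → Prop)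
    [DecidablePred P] (d : 𝓗 → 𝓗 → ℝ) :
    ∑ p : 𝓗 × 𝓗, condw π V p.1 * condw π V p.2 * (if P p.1 ∧ P p.2 then d p.1 p.2 else 0)
      = (∑ h ∈ V.filter P, ∑ h' ∈ V.filter P, π h * π h' * d h h') / pmass π V ^ 2 := by
  have hterm : ∀ p : 𝓗 × 𝓗,
      condw π V p.1 * condw π V p.2 * (if P p.1 ∧ P p.2 then d p.1 p.2 else 0)
        = if p ∈ V.filter P ×ˢ V.filter P then π p.1 * π p.2 * d p.1 p.2 / pmass π V ^ 2
          else 0 := by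
    rintro ⟨h, h'⟩
    simp only [condw, mem_product, mem_filter]
    split_ifs <;> first | (exfalso; tauto) | ring
  simp_rw [hterm, Fintype.sum_ite_mem, sum_product, sum_div]

end ConditionalWeights

theorem stmt_11_general {X 𝓗 : Type*} [MeasurableSpace X] [Fintype 𝓗] [DecidableEq 𝓗]
    (D : Measure X) [IsProbabilityMeasure D] (pred : 𝓗 → X → Bool)
    (π : 𝓗 → ℝ) (hπpos : ∀ h, 0 < π h)
    (V : Finset 𝓗)
    (rhat : ℝ) (hr0 : 0 < rhat)
    (x : X) (ρ : ℝ) (hρlb : 2 * rhat ≤ ρ) (hρub : ρ ≤ 1 / 2)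
    (hx : (pmass π (V.filter fun h => pred h x = true) / pmass π V) ^ 2
            * avgDiam D pred π (V.filter fun h => pred h x = true)
          ≤ (1 - ρ) * avgDiam D pred π V)
    (Φhat : ℝ)
    (hΦhat0 : (1 - rhat / 4) * avgDiam D pred π V ≤ Φhat)
    (n : ℕ) :
    (∑ ω : Fin n → 𝓗 × 𝓗,
        if (1 - rhat) * Φhat
            < (1 / (n : ℝ)) * (∑ i,
                if pred (ω i).1 x = true ∧ pred (ω i).2 x = true
                then derr D pred (ω i).1 (ω i).2 else 0)
        then ∏ i, condw π V (ω i).1 * condw π V (ω i).2 else 0)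
      ≤ Real.exp (-((n : ℝ) * Φhat * rhat ^ 2) / 12) := by
  set W : 𝓗 × 𝓗 → ℝ := fun p => condw π V p.1 * condw π V p.2
  set Z : 𝓗 × 𝓗 → ℝ := fun p =>
    if pred p.1 x = true ∧ pred p.2 x = true then derr D pred p.1 p.2 else 0
  have hπ : ∀ h, 0 ≤ π h := fun h => (hπpos h).le
  have hW0 : ∀ p, 0 ≤ W p := fun p => mul_nonneg (condw_nonneg hπ V _) (condw_nonneg hπ V _)
  have hZ0 : ∀ p, 0 ≤ Z p := fun p => ite_nonneg (derr_nonneg D pred _ _) le_rfl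
  have hZ1 : ∀ p, Z p ≤ 1 := fun p => ite_le_one (derr_le_one D pred _ _) zero_le_one
  have hmean : ∑ p, W p * Z p = (pmass π (V.filter fun h => pred h x = true) / pmass π V) ^ 2
      * avgDiam D pred π (V.filter fun h => pred h x = true) := by
    rw [sq_pmass_div_mul_avgDiam D pred hπpos]
    exact sum_condw_mul_condw_mul_ite_and π V (fun h => pred h x = true) (derr D pred)
  have hΦ := avgDiam_nonneg D pred hπ V
  have hΦhat : 0 ≤ Φhat := (mul_nonneg (by linarith) hΦ).trans hΦhat0
  have hμ : (∑ p, W p * Z p) * (1 - rhat / 4) ≤ (1 - 2 * rhat) * Φhat := by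
    have : ∑ p, W p * Z p ≤ (1 - 2 * rhat) * avgDiam D pred π V := by rw [hmean]; nlinarith
    nlinarith
  calc _ ≤ ∑ ω : Fin n → 𝓗 × 𝓗,
        (if n * ((1 - rhat) * Φhat) < ∑ i, Z (ω i) then ∏ i, W (ω i) else 0) :=
        sum_ite_le_sum_ite_of_imp _ (fun ω => prod_nonneg fun i _ => hW0 (ω i))
          fun ω => Nat.cast_mul_lt_of_lt_one_div_mul (mul_nonneg (by linarith) hΦhat)
    _ ≤ Real.exp (n * ((∑ p, W p * Z p) * (Real.exp (rhat / 4) - 1))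
          - rhat / 4 * (n * ((1 - rhat) * Φhat))) :=
        sum_prod_ite_lt_sum_le_exp hW0 (sum_condw_mul_condw_le_one hπ V) hZ0 hZ1 n
          (by linarith) _
    _ ≤ Real.exp (-((n : ℝ) * Φhat * rhat ^ 2) / 12) := by
        have := mul_le_mul_of_nonneg_left
          (tail_exponent_le hr0.le (by linarith) hΦhat hμ) n.cast_nonneg
        exact Real.exp_le_exp.2 (by linarith)

/-- if `(π(V_x^+)/π(V))² Φ(V_x^+) ≤ (1-ρ) Φ(V)` with
`2ρ̂ ≤ ρ ≤ 1/2`, and `(1 - ρ̂/4) Φ(V) ≤ Φ̂ ≤ (1 + ρ̂/4) Φ(V)`, then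
`Pr((1/n) ψ(E_x^+) > (1 - ρ̂) Φ̂) ≤ exp(-n Φ̂ ρ̂²/12)`. -/
theorem stmt_11 {X 𝓗 : Type*} [MeasurableSpace X] [Fintype 𝓗] [DecidableEq 𝓗]
    (D : Measure X) [IsProbabilityMeasure D] (pred : 𝓗 → X → Bool)
    (π : 𝓗 → ℝ) (hπpos : ∀ h, 0 < π h) (hπsum : ∑ h, π h = 1)
    (V : Finset 𝓗) (hV : 0 < pmass π V) (hΦ : 0 < avgDiam D pred π V)
    (rhat : ℝ) (hr0 : 0 < rhat) (hr1 : rhat ≤ 1)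
    (x : X) (ρ : ℝ) (hρlb : 2 * rhat ≤ ρ) (hρub : ρ ≤ 1 / 2)
    (hx : (pmass π (V.filter fun h => pred h x = true) / pmass π V) ^ 2
            * avgDiam D pred π (V.filter fun h => pred h x = true)
          ≤ (1 - ρ) * avgDiam D pred π V)
    (Φhat : ℝ)
    (hΦhat0 : (1 - rhat / 4) * avgDiam D pred π V ≤ Φhat)
    (hΦhat1 : Φhat ≤ (1 + rhat / 4) * avgDiam D pred π V)
    (n : ℕ) :
    (∑ ω : Fin n → 𝓗 × 𝓗,
        if (1 - rhat) * Φhat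
            < (1 / (n : ℝ)) * (∑ i,
                if pred (ω i).1 x = true ∧ pred (ω i).2 x = true
                then derr D pred (ω i).1 (ω i).2 else 0)
        then ∏ i, condw π V (ω i).1 * condw π V (ω i).2 else 0)
      ≤ Real.exp (-((n : ℝ) * Φhat * rhat ^ 2) / 12) :=
  stmt_11_general D pred π hπpos V rhat hr0 x ρ hρlb hρub hx Φhat hΦhat0 n
end

section
/- Let V = {h_1, …, h_n} be a set of n ≥ 3 hypotheses such that d(h_i, h_j) = 1/2 for all i ≠ j, and let π be the uniform distribution on V. Then for every partition of V into two disjoint sets A and B (A ∪ B = V), max{Φ(A), Φ(B)} ≥ ((n−2)/(n−1)) · Φ(V), where if one part is empty the maximum is taken over the nonempty part. In particular, for any binary query x partitioning V into V_x^+ and V_x^−, max{Φ(V_x^+), Φ(V_x^−)} ≥ ((n−2)/(n−1)) · Φ(V). -/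
open MeasureTheory Finset

/-!
For a uniform prior on a set of hypotheses at pairwise distance `δ`, the average diameter of a
`k`-element subset is `δ (k - 1) / k`. Any two-part partition of `n` hypotheses has a part of
size `k ≥ n / 2`, and then `(k - 1) / k ≥ 1 - 2 / n = ((n - 2) / (n - 1)) · ((n - 1) / n)`.
-/

section AverageDiameter

variable {X 𝓗 : Type*} [MeasurableSpace X] (D : Measure X) (pred : 𝓗 → X → Bool)

lemma sum_derr_of_pairwise_eq [DecidableEq 𝓗] {δ : ℝ} {A : Finset 𝓗}
    (hd : ∀ h ∈ A, ∀ h' ∈ A, h ≠ h' → derr D pred h h' = δ) {h : 𝓗} (hh : h ∈ A) :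
    ∑ h' ∈ A, derr D pred h h' = δ * ((#A : ℝ) - 1) := by
  rw [← add_sum_erase A _ hh, derr_self, zero_add,
    sum_congr rfl fun h' hh' => hd h hh h' (mem_of_mem_erase hh') (ne_of_mem_erase hh').symm,
    sum_const, card_erase_of_mem hh, nsmul_eq_mul, Nat.cast_pred (card_pos.2 ⟨h, hh⟩)]
  ring

lemma avgDiam_const_of_pairwise_eq [DecidableEq 𝓗] {c δ : ℝ} (hc : c ≠ 0) {A : Finset 𝓗}
    (hd : ∀ h ∈ A, ∀ h' ∈ A, h ≠ h' → derr D pred h h' = δ) :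
    avgDiam D pred (fun _ => c) A = δ * ((#A : ℝ) - 1) / #A := by
  rcases A.eq_empty_or_nonempty with rfl | hA
  · simp [avgDiam]
  have hsum : ∑ h ∈ A, ∑ h' ∈ A, c * c * derr D pred h h' = #A * (c ^ 2 * (δ * (#A - 1))) := by
    rw [sum_congr rfl fun h hh => by rw [← mul_sum, sum_derr_of_pairwise_eq D pred hd hh],
      sum_const, nsmul_eq_mul]
    ring
  have hA : (#A : ℝ) ≠ 0 := by exact_mod_cast hA.card_pos.ne'
  rw [avgDiam, pmass, hsum, sum_const, nsmul_eq_mul]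
  field_simp

end AverageDiameter

lemma sub_two_div_sub_one_mul_le {n k : ℕ} (hn : 3 ≤ n) (hk : n ≤ 2 * k) {δ : ℝ} (hδ : 0 ≤ δ) :
    ((n : ℝ) - 2) / ((n : ℝ) - 1) * (δ * ((n : ℝ) - 1) / n) ≤ δ * ((k : ℝ) - 1) / k := by
  have hn' : (3 : ℝ) ≤ n := by exact_mod_cast hn
  have hk' : (n : ℝ) ≤ 2 * k := by exact_mod_cast hk
  have hk0 : (0 : ℝ) < k := by linarith
  rw [div_mul_div_comm, div_le_div_iff₀ (by nlinarith) hk0]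
  nlinarith [mul_nonneg hδ (by linarith : (0 : ℝ) ≤ 2 * k - n)]

theorem stmt_17_general {X 𝓗 : Type*} [MeasurableSpace X] [Fintype 𝓗] [DecidableEq 𝓗]
    (D : Measure X) (pred : 𝓗 → X → Bool)
    (n : ℕ) (hn : 3 ≤ n) (hcard : Fintype.card 𝓗 = n)
    (hd : ∀ h h' : 𝓗, h ≠ h' → derr D pred h h' = 1 / 2) :
    (∀ A B : Finset 𝓗, Disjoint A B → A ∪ B = Finset.univ →
        ((n : ℝ) - 2) / ((n : ℝ) - 1)
            * avgDiam D pred (fun _ => 1 / (n : ℝ)) (Finset.univ : Finset 𝓗)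
          ≤ max (avgDiam D pred (fun _ => 1 / (n : ℝ)) A)
              (avgDiam D pred (fun _ => 1 / (n : ℝ)) B))
      ∧ ∀ x : X,
        ((n : ℝ) - 2) / ((n : ℝ) - 1)
            * avgDiam D pred (fun _ => 1 / (n : ℝ)) (Finset.univ : Finset 𝓗)
          ≤ max
              (avgDiam D pred (fun _ => 1 / (n : ℝ))
                (Finset.univ.filter fun h => pred h x = true))
              (avgDiam D pred (fun _ => 1 / (n : ℝ))
                (Finset.univ.filter fun h => pred h x = false)) := by
  have hΦ (A : Finset 𝓗) : avgDiam D pred (fun _ => 1 / (n : ℝ)) A = 1 / 2 * ((#A : ℝ) - 1) / #A :=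
    avgDiam_const_of_pairwise_eq D pred (by positivity) fun h _ h' _ => hd h h'
  have partition (A B : Finset 𝓗) (hAB : Disjoint A B) (hU : A ∪ B = univ) :
      ((n : ℝ) - 2) / ((n : ℝ) - 1) * avgDiam D pred (fun _ => 1 / (n : ℝ)) univ
        ≤ max (avgDiam D pred (fun _ => 1 / (n : ℝ)) A)
          (avgDiam D pred (fun _ => 1 / (n : ℝ)) B) := by
    have hsize : #A + #B = n := by rw [← card_union_of_disjoint hAB, hU, card_univ, hcard]
    rw [hΦ, hΦ, hΦ, card_univ, hcard]
    rcases le_total #B #A with hBA | hAB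
    · exact (sub_two_div_sub_one_mul_le hn (by omega) (by norm_num)).trans (le_max_left _ _)
    · exact (sub_two_div_sub_one_mul_le hn (by omega) (by norm_num)).trans (le_max_right _ _)
  refine ⟨partition, fun x => partition _ _ ?_ ?_⟩
  · simp [disjoint_filter]
  · ext h
    simp [Bool.eq_false_or_eq_true (pred h x)]

/-- if `V` consists of `n ≥ 3` hypotheses with pairwise distance
`1/2` and `π` is uniform on `V`, then for every partition of `V` into disjoint
sets `A` and `B`, `max{Φ(A), Φ(B)} ≥ ((n-2)/(n-1)) Φ(V)`; in particular, for any
binary query `x` partitioning `V` into `V_x^+` and `V_x^-`,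
`max{Φ(V_x^+), Φ(V_x^-)} ≥ ((n-2)/(n-1)) Φ(V)`.  (The average diameter of the
empty set is `0` by convention, so the maximum is effectively taken over the
nonempty parts.) -/
theorem stmt_17 {X 𝓗 : Type*} [MeasurableSpace X] [Fintype 𝓗] [DecidableEq 𝓗]
    (D : Measure X) [IsProbabilityMeasure D] (pred : 𝓗 → X → Bool)
    (n : ℕ) (hn : 3 ≤ n) (hcard : Fintype.card 𝓗 = n)
    (hd : ∀ h h' : 𝓗, h ≠ h' → derr D pred h h' = 1 / 2) :
    (∀ A B : Finset 𝓗, Disjoint A B → A ∪ B = Finset.univ →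
        ((n : ℝ) - 2) / ((n : ℝ) - 1)
            * avgDiam D pred (fun _ => 1 / (n : ℝ)) (Finset.univ : Finset 𝓗)
          ≤ max (avgDiam D pred (fun _ => 1 / (n : ℝ)) A)
              (avgDiam D pred (fun _ => 1 / (n : ℝ)) B))
      ∧ ∀ x : X,
        ((n : ℝ) - 2) / ((n : ℝ) - 1)
            * avgDiam D pred (fun _ => 1 / (n : ℝ)) (Finset.univ : Finset 𝓗)
          ≤ max
              (avgDiam D pred (fun _ => 1 / (n : ℝ))
                (Finset.univ.filter fun h => pred h x = true))
              (avgDiam D pred (fun _ => 1 / (n : ℝ))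
                (Finset.univ.filter fun h => pred h x = false)) :=
  stmt_17_general D pred n hn hcard hd
end
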